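/- (Core of the lemma that the finalized chain of an honest validator grows monotonically.) Let V ⊆ V′ be sets of FFG-votes among n validators such that the set of validators violating E1 or E2 w.r.t. V′ has cardinality m with 3·m < n. If 𝒞 is finalized w.r.t. V and 𝒞′ is a greatest finalized checkpoint w.r.t. V′ (i.e., 𝒞′ is finalized w.r.t. V′ and every checkpoint finalized w.r.t. V′ is ≤ 𝒞′ in the checkpoint order), then 𝒞.chain ⪯ 𝒞′.chain. -/

import Mathlib

structure Block (β : Type) where
  body : β
  p : ℤ

def genesisBlock {β : Type} (g : β) : Block β := ⟨g, -1⟩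

structure Chain (β : Type) (g : β) where
  blocks : List (Block β)
  ne : blocks ≠ []
  head_genesis : blocks.head? = some (genesisBlock g)
  strict : List.Chain' (fun a b => a.p < b.p) blocks

namespace Chain

variable {β : Type} {g : β}

/-- The height of a chain: the slot of its last block. -/
def height (χ : Chain β g) : ℤ := (χ.blocks.getLast χ.ne).p

/-- `χ₁ ⪯ χ₂`: `χ₁` is a prefix of `χ₂`. -/
def IsPrefix (χ₁ χ₂ : Chain β g) : Prop := χ₁.blocks <+: χ₂.blocks

/-- Two chains conflict if neither is a prefix of the other. -/
def Conflicts (χ₁ χ₂ : Chain β g) : Prop := ¬ χ₁.IsPrefix χ₂ ∧ ¬ χ₂.IsPrefix χ₁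

end Chain

def genesisChain {β : Type} (g : β) : Chain β g where
  blocks := [genesisBlock g]
  ne := by simp
  head_genesis := rfl
  strict := List.isChain_singleton _

structure Checkpoint (β : Type) (g : β) where
  chain : Chain β g
  c : ℕ
  height_le : chain.height ≤ (c : ℤ)

def genesisCheckpoint {β : Type} (g : β) : Checkpoint β g where
  chain := genesisChain g
  c := 0
  height_le := by simp [Chain.height, genesisChain, genesisBlock]

namespace Checkpoint

variable {β : Type} {g : β}

/-- Lexicographic order on checkpoints: `𝒞 ≤ 𝒞′`. -/
def le (C C' : Checkpoint β g) : Prop :=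
  C.c < C'.c ∨ (C.c = C'.c ∧ C.chain.height ≤ C'.chain.height)

/-- Strict lexicographic order on checkpoints: `𝒞 < 𝒞′`. -/
def lt (C C' : Checkpoint β g) : Prop :=
  C.c < C'.c ∨ (C.c = C'.c ∧ C.chain.height < C'.chain.height)

end Checkpoint

structure FFGVote (n : ℕ) (β : Type) (g : β) where
  source : Checkpoint β g
  target : Checkpoint β g
  sender : Fin n

def FFGVote.Valid {n : ℕ} {β : Type} {g : β} (m : FFGVote n β g) : Prop :=
  m.source.chain.IsPrefix m.target.chain ∧ m.source.c < m.target.c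

/-- The set of senders of a set of votes. -/
def senders {n : ℕ} {β : Type} {g : β} (M : Set (FFGVote n β g)) : Set (Fin n) :=
  {v | ∃ m ∈ M, m.sender = v}

/-- A checkpoint is justified w.r.t. a set of votes `V`. -/
inductive Justified {n : ℕ} {β : Type} {g : β} (V : Set (FFGVote n β g)) :
    Checkpoint β g → Prop
  | genesis : Justified V (genesisCheckpoint g)
  | step (C : Checkpoint β g) (M : Set (FFGVote n β g))
      (hMV : M ⊆ V)
      (hcard : 2 * n ≤ 3 * (senders M).ncard)
      (hjust : ∀ m ∈ M, Justified V m.source)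
      (hvotes : ∀ m ∈ M, m.Valid ∧
        m.source.chain.IsPrefix C.chain ∧ C.chain.IsPrefix m.target.chain ∧
        m.target.c = C.c) :
      Justified V C

/-- A checkpoint is finalized w.r.t. a set of votes `V`. -/
def Finalized {n : ℕ} {β : Type} {g : β} (V : Set (FFGVote n β g))
    (C : Checkpoint β g) : Prop :=
  C = genesisCheckpoint g ∨
    (Justified V C ∧ ∃ M ⊆ V, 2 * n ≤ 3 * (senders M).ncard ∧
      ∀ m ∈ M, m.Valid ∧ m.source = C ∧ m.target.c = C.c + 1)

/-- E1 (double voting). -/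
def ViolatesE1 {n : ℕ} {β : Type} {g : β} (V : Set (FFGVote n β g)) (v : Fin n) : Prop :=
  ∃ m₁ ∈ V, ∃ m₂ ∈ V, m₁.sender = v ∧ m₂.sender = v ∧ m₁ ≠ m₂ ∧
    m₁.target.c = m₂.target.c

/-- E2 (surround voting). -/
def ViolatesE2 {n : ℕ} {β : Type} {g : β} (V : Set (FFGVote n β g)) (v : Fin n) : Prop :=
  ∃ m₁ ∈ V, ∃ m₂ ∈ V, m₁.sender = v ∧ m₂.sender = v ∧
    m₂.source.lt m₁.source ∧ m₁.target.c < m₂.target.c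

structure Ack (n : ℕ) (β : Type) (g : β) where
  cp : Checkpoint β g
  sender : Fin n

/-- E3 (ack surround). -/
def ViolatesE3 {n : ℕ} {β : Type} {g : β} (V : Set (FFGVote n β g))
    (A : Set (Ack n β g)) (v : Fin n) : Prop :=
  ∃ m ∈ V, ∃ a ∈ A, m.sender = v ∧ a.sender = v ∧
    m.source.lt a.cp ∧ a.cp.c < m.target.c

/-- Finalized with acknowledgments. -/
def FinalizedWithAcks {n : ℕ} {β : Type} {g : β} (V : Set (FFGVote n β g))
    (A : Set (Ack n β g)) (C : Checkpoint β g) : Prop :=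
  Finalized V C ∨
    (Justified V C ∧ 2 * n ≤ 3 * (Set.ncard {v : Fin n | (⟨C, v⟩ : Ack n β g) ∈ A}))


/-!
Two supermajorities of validators share a validator that violates neither E1 nor E2, since the
violators are fewer than a third. Comparing that validator's two votes shows that justified
checkpoints at a common slot lie on one chain, and, by induction on the justification of a later
checkpoint `D`, that a checkpoint `C` carrying a supermajority link `C → C.c + 1` is a prefix of
every justified `D` with `C ≤ D`: the honest vote justifying `D` cannot skip over that link without
double or surround voting, so its source again lies at or above `C`. The greatest finalized
checkpoint is justified and lies above every finalized one, which gives the claim.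
-/

namespace Chain

variable {β : Type} {g : β}

lemma genesisChain_isPrefix (χ : Chain β g) : (genesisChain g).IsPrefix χ := by
  obtain ⟨_ | ⟨b, t⟩, ne, hg, -⟩ := χ
  · exact absurd rfl ne
  · cases Option.some.inj hg
    exact ⟨t, rfl⟩

lemma height_lt_of_isPrefix {χ₁ χ₂ : Chain β g} (h : χ₁.IsPrefix χ₂)
    (hne : χ₁.blocks ≠ χ₂.blocks) : χ₁.height < χ₂.height := by
  obtain ⟨t, ht⟩ := h
  have ht_ne : t ≠ [] := by rintro rfl; exact hne (by simpa using ht)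
  have hpw : (χ₁.blocks ++ t).Pairwise (fun a b => a.p < b.p) :=
    ht ▸ List.isChain_iff_pairwise.mp χ₂.strict
  have hlast : χ₂.blocks.getLast χ₂.ne = t.getLast ht_ne :=
    (List.getLast_congr _ (by simp [ht_ne]) ht.symm).trans
      (List.getLast_append_of_ne_nil _ ht_ne)
  rw [height, height, hlast]
  exact (List.pairwise_append.mp hpw).2.2 _ (List.getLast_mem _) _ (List.getLast_mem _)

lemma isPrefix_of_isPrefix_of_height_le {χ₁ χ₂ : Chain β g} (h : χ₂.IsPrefix χ₁)
    (hh : χ₁.height ≤ χ₂.height) : χ₁.IsPrefix χ₂ := by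
  by_cases hne : χ₂.blocks = χ₁.blocks
  · exact (hne ▸ List.prefix_refl _ : χ₁.blocks <+: χ₂.blocks)
  · exact absurd hh (not_le.mpr (height_lt_of_isPrefix h hne))

end Chain

lemma Checkpoint.le_of_not_lt {β : Type} {g : β} {C D : Checkpoint β g} (h : ¬ D.lt C) :
    C.le D := by
  unfold Checkpoint.lt Checkpoint.le at *
  omega

lemma exists_mem_inter_notMem_of_two_thirds {α : Type*} [Finite α] {S₁ S₂ B : Set α}
    (h₁ : 2 * Nat.card α ≤ 3 * S₁.ncard) (h₂ : 2 * Nat.card α ≤ 3 * S₂.ncard)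
    (hB : 3 * B.ncard < Nat.card α) : ∃ v ∈ S₁ ∩ S₂, v ∉ B := by
  have hunion := Set.ncard_le_card (S₁ ∪ S₂)
  have hsum := Set.ncard_inter_add_ncard_union S₁ S₂
  exact Set.exists_mem_notMem_of_ncard_lt_ncard (by omega)

section Votes

variable {n : ℕ} {β : Type} {g : β} {V V' : Set (FFGVote n β g)}

lemma Justified.mono (h : V ⊆ V') {C : Checkpoint β g} (hC : Justified V C) :
    Justified V' C := by
  induction hC with
  | genesis => exact .genesis
  | step C M hMV hcard _ hvotes ih => exact .step C M (hMV.trans h) hcard ih hvotes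

lemma Finalized.mono (h : V ⊆ V') {C : Checkpoint β g} (hC : Finalized V C) :
    Finalized V' C :=
  hC.imp_right fun ⟨hj, M, hMV, hM⟩ => ⟨hj.mono h, M, hMV.trans h, hM⟩

lemma Finalized.justified {C : Checkpoint β g} (hC : Finalized V C) : Justified V C := by
  rcases hC with rfl | ⟨hj, -⟩
  exacts [.genesis, hj]

lemma exists_honest_common_sender
    (hslash : 3 * Set.ncard {v : Fin n | ViolatesE1 V v ∨ ViolatesE2 V v} < n)
    {M₁ M₂ : Set (FFGVote n β g)} (h₁ : 2 * n ≤ 3 * (senders M₁).ncard)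
    (h₂ : 2 * n ≤ 3 * (senders M₂).ncard) :
    ∃ m₁ ∈ M₁, ∃ m₂ ∈ M₂, m₁.sender = m₂.sender ∧
      ¬ ViolatesE1 V m₁.sender ∧ ¬ ViolatesE2 V m₁.sender := by
  obtain ⟨v, ⟨⟨m₁, hm₁, rfl⟩, ⟨m₂, hm₂, hs⟩⟩, hv⟩ :=
    exists_mem_inter_notMem_of_two_thirds (α := Fin n) (by simpa using h₁) (by simpa using h₂)
      (by simpa using hslash)
  exact ⟨m₁, hm₁, m₂, hm₂, hs.symm, not_or.mp hv⟩

lemma eq_of_not_violatesE1 {v : Fin n} (hv : ¬ ViolatesE1 V v) {m₁ m₂ : FFGVote n β g}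
    (hm₁ : m₁ ∈ V) (hm₂ : m₂ ∈ V) (hs₁ : m₁.sender = v) (hs₂ : m₂.sender = v)
    (hc : m₁.target.c = m₂.target.c) : m₁ = m₂ := by
  by_contra hne
  exact hv ⟨m₁, hm₁, m₂, hm₂, hs₁, hs₂, hne, hc⟩

lemma source_le_of_not_violatesE2 {v : Fin n} (hv : ¬ ViolatesE2 V v) {m₁ m₂ : FFGVote n β g}
    (hm₁ : m₁ ∈ V) (hm₂ : m₂ ∈ V) (hs₁ : m₁.sender = v) (hs₂ : m₂.sender = v)
    (hc : m₁.target.c < m₂.target.c) : m₁.source.le m₂.source :=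
  Checkpoint.le_of_not_lt fun hlt => hv ⟨m₁, hm₁, m₂, hm₂, hs₁, hs₂, hlt, hc⟩

variable (hslash : 3 * Set.ncard {v : Fin n | ViolatesE1 V v ∨ ViolatesE2 V v} < n)
include hslash

lemma Justified.isPrefix_or_isPrefix {C D : Checkpoint β g} (hC : Justified V C)
    (hD : Justified V D) (hc : C.c = D.c) :
    C.chain.IsPrefix D.chain ∨ D.chain.IsPrefix C.chain := by
  cases hC with
  | genesis => exact .inl (Chain.genesisChain_isPrefix _)
  | step _ M₁ hM₁ hcard₁ _ hv₁ =>
    cases hD with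
    | genesis => exact .inr (Chain.genesisChain_isPrefix _)
    | step _ M₂ hM₂ hcard₂ _ hv₂ =>
      obtain ⟨m₁, hm₁, m₂, hm₂, hs, hE1, -⟩ := exists_honest_common_sender hslash hcard₁ hcard₂
      have heq : m₁ = m₂ := eq_of_not_violatesE1 hE1 (hM₁ hm₁) (hM₂ hm₂) rfl hs.symm
        (by rw [(hv₁ m₁ hm₁).2.2.2, (hv₂ m₂ hm₂).2.2.2, hc])
      subst heq
      exact List.prefix_or_prefix_of_prefix (hv₁ m₁ hm₁).2.2.1 (hv₂ m₁ hm₂).2.2.1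

lemma Justified.isPrefix_of_c_eq {C D : Checkpoint β g} (hC : Justified V C)
    (hD : Justified V D) (hc : C.c = D.c) (hh : C.chain.height ≤ D.chain.height) :
    C.chain.IsPrefix D.chain :=
  (hC.isPrefix_or_isPrefix hslash hD hc).elim id
    (Chain.isPrefix_of_isPrefix_of_height_le · hh)

lemma Justified.isPrefix_of_c_lt {C : Checkpoint β g} (hC : Justified V C)
    {M₀ : Set (FFGVote n β g)} (hM₀V : M₀ ⊆ V) (hcard₀ : 2 * n ≤ 3 * (senders M₀).ncard)
    (hM₀ : ∀ m ∈ M₀, m.Valid ∧ m.source = C ∧ m.target.c = C.c + 1)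
    {D : Checkpoint β g} (hD : Justified V D) (hlt : C.c < D.c) : C.chain.IsPrefix D.chain := by
  induction hD with
  | genesis => exact absurd hlt (Nat.not_lt_zero _)
  | step D M hMV hcard hjust hvotes ih =>
    obtain ⟨m₀, hm₀, m, hm, hs, hE1, hE2⟩ := exists_honest_common_sender hslash hcard₀ hcard
    obtain ⟨-, hsrc₀, htgt₀⟩ := hM₀ m₀ hm₀
    obtain ⟨-, hsrc, -, htgt⟩ := hvotes m hm
    have hCS : C.le m.source := by
      rcases (Nat.succ_le_of_lt hlt).eq_or_lt with hDc | hDc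
      · have heq := eq_of_not_violatesE1 hE1 (hM₀V hm₀) (hMV hm) rfl hs.symm (by omega)
        rw [← hsrc₀, heq]
        exact .inr ⟨rfl, le_rfl⟩
      · exact hsrc₀ ▸ source_le_of_not_violatesE2 hE2 (hM₀V hm₀) (hMV hm) rfl hs.symm (by omega)
    refine .trans ?_ hsrc
    rcases hCS with hlt' | ⟨hc, hh⟩
    exacts [ih m hm hlt', hC.isPrefix_of_c_eq hslash (hjust m hm) hc hh]

lemma Justified.isPrefix_of_le {C : Checkpoint β g} (hC : Justified V C)
    {M₀ : Set (FFGVote n β g)} (hM₀V : M₀ ⊆ V) (hcard₀ : 2 * n ≤ 3 * (senders M₀).ncard)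
    (hM₀ : ∀ m ∈ M₀, m.Valid ∧ m.source = C ∧ m.target.c = C.c + 1)
    {D : Checkpoint β g} (hD : Justified V D) (hle : C.le D) : C.chain.IsPrefix D.chain := by
  rcases hle with hlt | ⟨hc, hh⟩
  exacts [hC.isPrefix_of_c_lt hslash hM₀V hcard₀ hM₀ hD hlt, hC.isPrefix_of_c_eq hslash hD hc hh]

end Votes

/-- core of the monotone growth of the finalized chain. -/
theorem finalized_chain_grows
    {n : ℕ} {β : Type} {g : β} (V V' : Set (FFGVote n β g)) (hsub : V ⊆ V')
    (hslash : 3 * Set.ncard {v : Fin n | ViolatesE1 V' v ∨ ViolatesE2 V' v} < n)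
    (C C' : Checkpoint β g)
    (hC : Finalized V C)
    (hC' : Finalized V' C')
    (hgreatest : ∀ D : Checkpoint β g, Finalized V' D → D.le C') :
    C.chain.IsPrefix C'.chain := by
  have hCV' : Finalized V' C := hC.mono hsub
  have hle : C.le C' := hgreatest C hCV'
  obtain rfl | ⟨hCj, M₀, hM₀V, hcard₀, hM₀⟩ := hCV'
  · exact Chain.genesisChain_isPrefix _
  · exact hCj.isPrefix_of_le hslash hM₀V hcard₀ hM₀ hC'.justified hle
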